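/- arXiv:1212.5302 — 2 statements merged into one kernel-verified Lean document; each statement's English description precedes it below -/
import Mathlib

section
/- Let (A1,B1,C1,D1) and (A2,B2,C2,D2) be Speh quadruples with A1 < A2, D1 < D2, A2 ≤ D1 + 1, and additionally C1 < A2 and D1 < B2. Then the multisegment MWA(m1 + m2) contains a segment of cardinality (C1 − A1 + 1) + (C2 − A2 + 1), where m_i = m(A_i,B_i,C_i,D_i). -/
/-- A Speh quadruple: integers `A ≤ B`, `A ≤ C` with `A + D = B + C`. -/
def SpehQuad (A B C D : ℤ) : Prop := A ≤ B ∧ A ≤ C ∧ A + D = B + C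

/-- The integer segment (as a finite set) associated to a pair `(b, e)`. -/
noncomputable def segSet (s : ℤ × ℤ) : Finset ℤ := Finset.Icc s.1 s.2

/-- A finite set of integers is a ℤ-segment if it equals `Finset.Icc x y` for some `x ≤ y`. -/
def IsZSegment (S : Finset ℤ) : Prop := ∃ x y : ℤ, x ≤ y ∧ S = Finset.Icc x y

/-- The rectangular multisegment `m(A,B,C,D)`: the segments `[A+j, B+j]` for `j = 0, …, C−A`.
(Here `D = B + C − A` is determined by the other three entries.) -/
def rectMulti (A B C : ℤ) : Multiset (ℤ × ℤ) :=
  (Multiset.range (C - A + 1).toNat).map fun j => (A + (j : ℤ), B + (j : ℤ))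

/-- A multiset of pairs represents a multisegment when each pair `(b,e)` satisfies `b ≤ e`. -/
def ValidMS (a : Multiset (ℤ × ℤ)) : Prop := ∀ s ∈ a, s.1 ≤ s.2

/-- Total number of points of a multisegment (used as fuel for the MW algorithm). -/
def msSize (a : Multiset (ℤ × ℤ)) : ℕ := (a.map fun s => (s.2 + 1 - s.1).toNat).sum

/-- Removing the last element of a segment: `[b,e] ↦ [b,e−1]`, omitted if empty. -/
def truncate (s : ℤ × ℤ) : Multiset (ℤ × ℤ) :=
  if s.1 ≤ s.2 - 1 then {(s.1, s.2 - 1)} else 0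

/-- Maximum of a multiset of integers (default `0` on the empty multiset). -/
def msMaxD (m : Multiset ℤ) : ℤ := WithBot.unbotD 0 m.toFinset.max

/-- The chain of stages of one step of the Mœglin–Waldspurger algorithm.
`chainAux fuel rem b e` looks in `rem` for a segment with end `e` and beginning `< b`,
of maximal beginning; if found, it is removed, its truncation is recorded, and the chain
continues with end `e − 1`.  Returns the number of segments chosen together with the
resulting multisegment (remaining segments plus truncations of chosen ones). -/
def chainAux : ℕ → Multiset (ℤ × ℤ) → ℤ → ℤ → ℕ × Multiset (ℤ × ℤ)
  | 0, rem, _, _ => (0, rem)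
  | n + 1, rem, b, e =>
    let S := rem.filter fun s => s.2 = e ∧ s.1 < b
    if S = 0 then (0, rem)
    else
      let b' := msMaxD (S.map Prod.fst)
      let r := chainAux n (rem.erase (b', e)) b' (e - 1)
      (r.1 + 1, truncate (b', e) + r.2)

/-- One step of the Mœglin–Waldspurger algorithm on a (nonempty) multisegment:
returns the segment `Γ = [x−k+1, x]` and the multisegment `a′`. -/
def mwaStep (a : Multiset (ℤ × ℤ)) : (ℤ × ℤ) × Multiset (ℤ × ℤ) :=
  let x := msMaxD (a.map Prod.snd)
  let b1 := msMaxD ((a.filter fun s => s.2 = x).map Prod.fst)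
  let r := chainAux a.card (a.erase (b1, x)) b1 (x - 1)
  ((x - r.1, x), truncate (b1, x) + r.2)

/-- The Mœglin–Waldspurger algorithm, with fuel. -/
def mwaAux : ℕ → Multiset (ℤ × ℤ) → Multiset (ℤ × ℤ)
  | 0, _ => 0
  | n + 1, a =>
    if a = 0 then 0
    else
      let r := mwaStep a
      r.1 ::ₘ mwaAux n r.2

/-- The Mœglin–Waldspurger algorithm, computing the Zelevinsky dual of a multisegment.
(The fuel `msSize a` suffices: each step strictly decreases the total number of points.) -/
def MWA (a : Multiset (ℤ × ℤ)) : Multiset (ℤ × ℤ) := mwaAux (msSize a) a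

/-- Two segments are linked if their union is a ℤ-segment different from both of them. -/
def Linked (s t : ℤ × ℤ) : Prop :=
  IsZSegment (segSet s ∪ segSet t) ∧ segSet s ∪ segSet t ≠ segSet s ∧
    segSet s ∪ segSet t ≠ segSet t

/-- The intersection of two linked segments, as a multisegment (empty if disjoint). -/
def segInterM (s t : ℤ × ℤ) : Multiset (ℤ × ℤ) :=
  if max s.1 t.1 ≤ min s.2 t.2 then {(max s.1 t.1, min s.2 t.2)} else 0

/-- Elementary linking operation: `Prec c b` holds when `b` contains linked segments
`s, t` and `c` is obtained from `b` by replacing them with `s ∪ t` (and `s ∩ t` if nonempty). -/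
def Prec (c b : Multiset (ℤ × ℤ)) : Prop :=
  ∃ s t rest, b = s ::ₘ t ::ₘ rest ∧ Linked s t ∧
    c = (min s.1 t.1, max s.2 t.2) ::ₘ (segInterM s t + rest)

/-- The linking (strict) order on multisegments. -/
def MLt : Multiset (ℤ × ℤ) → Multiset (ℤ × ℤ) → Prop := Relation.TransGen Prec

/-- Strong ordering of Speh quadruples. -/
def StrongLt (A1 B1 C1 D1 A2 B2 C2 D2 : ℤ) : Prop :=
  A1 < A2 ∧ B1 < B2 ∧ C1 < C2 ∧ D1 < D2

/-- The set `I(A,B,C,D)` attached to a Speh quadruple. -/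
def ISet (A B C D : ℤ) : Set ℤ := {z : ℤ | z ≤ A - 1} ∪ ↑(Finset.Icc (B + 1) (D + 1))

/-- Pattern: integers `i < j < k` with `i, k ∈ I \ J` and `j ∈ J \ I`. -/
def PPat (I J : Set ℤ) : Prop :=
  ∃ i j k : ℤ, i < j ∧ j < k ∧ i ∈ I \ J ∧ j ∈ J \ I ∧ k ∈ I \ J

/-- Reflection of a multisegment: `[b,e] ↦ [−e,−b]`. -/
def reflMS (a : Multiset (ℤ × ℤ)) : Multiset (ℤ × ℤ) := a.map fun s => (-s.2, -s.1)

/-!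
Every segment of `m(A₁,B₁,C₁,D₁)` ends at most at `D₁ < B₂`, so the first step of the
Mœglin–Waldspurger algorithm starts with the top segment `[C₂, D₂]` of the upper rectangle and its
chain descends through all of its segments down to `[A₂, B₂]`. If `B₂ > D₁ + 1`, no segment ends
at `B₂ - 1`: the chain stops and the step merely turns the upper rectangle into
`m(A₂, B₂ - 1, C₂, D₂ - 1)`, so we may induct on `B₂`. When `B₂ = D₁ + 1`, the chain continues
with `[C₁, D₁]` (as `C₁ < A₂`) and through the whole lower rectangle, so the segment `Γ` it
produces has `(C₁ - A₁ + 1) + (C₂ - A₂ + 1)` points.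
-/

section RectMulti

variable {A B C : ℤ}

lemma rectMulti_eq_map : rectMulti A B C =
    (Multiset.range (C - A + 1).toNat).map fun j : ℕ => (A + (j : ℤ), B + (j : ℤ)) := by
  simp only [rectMulti, Multiset.pure_def, Multiset.bind_def, Multiset.bind_singleton,
    Multiset.map_map, Function.comp_def]

lemma rectMulti_eq_zero_of_lt (h : C < A) : rectMulti A B C = 0 := by
  simp [rectMulti_eq_map, show (C - A + 1).toNat = 0 by omega]

lemma rectMulti_eq_cons (h : A ≤ C) :
    rectMulti A B C = (C, B + (C - A)) ::ₘ rectMulti A B (C - 1) := by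
  rw [rectMulti_eq_map, rectMulti_eq_map,
    show (C - A + 1).toNat = (C - 1 - A + 1).toNat + 1 by omega, Multiset.range_succ,
    Multiset.map_cons, show ((C - 1 - A + 1).toNat : ℤ) = C - A by omega,
    add_sub_cancel]

lemma mem_rectMulti {s : ℤ × ℤ} :
    s ∈ rectMulti A B C ↔ A ≤ s.1 ∧ s.1 ≤ C ∧ s.2 = s.1 + (B - A) := by
  simp only [rectMulti_eq_map, Multiset.mem_map, Multiset.mem_range]
  constructor
  · rintro ⟨j, hj, rfl⟩
    omega
  · rintro ⟨h1, h2, h3⟩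
    exact ⟨(s.1 - A).toNat, by omega, Prod.ext (by simp only; omega) (by simp only; omega)⟩

lemma card_rectMulti : Multiset.card (rectMulti A B C) = (C - A + 1).toNat := by
  simp [rectMulti_eq_map]

lemma msSize_rectMulti : msSize (rectMulti A B C) = (C - A + 1).toNat * (B + 1 - A).toNat := by
  have hlen (j : ℕ) : (B + j + 1 - (A + j)).toNat = (B + 1 - A).toNat := by omega
  simp [msSize, rectMulti_eq_map, hlen]

lemma rectMulti_bind_truncate (h : A < B) :
    (rectMulti A B C).bind truncate = rectMulti A (B - 1) C := by
  rw [rectMulti_eq_map, Multiset.bind_map, rectMulti_eq_map, ← Multiset.bind_singleton]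
  refine Multiset.bind_congr fun j _ => ?_
  rw [truncate, if_pos (by simp only; omega)]
  congr 2
  ring

end RectMulti

lemma msSize_add (a b : Multiset (ℤ × ℤ)) : msSize (a + b) = msSize a + msSize b := by
  simp [msSize]

lemma msMaxD_eq_of_mem {m : Multiset ℤ} {a : ℤ} (ha : a ∈ m) (h : ∀ b ∈ m, b ≤ a) :
    msMaxD m = a := by
  have hmax : m.toFinset.max = (a : WithBot ℤ) :=
    le_antisymm
      (Finset.max_le fun b hb => WithBot.coe_le_coe.mpr (h b (Multiset.mem_toFinset.mp hb)))
      (Finset.le_max (Multiset.mem_toFinset.mpr ha))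
  rw [msMaxD, hmax]
  rfl

lemma chainAux_of_forall_ne {fuel : ℕ} {rem : Multiset (ℤ × ℤ)} {b e : ℤ}
    (h : ∀ s ∈ rem, s.2 ≠ e) : chainAux fuel rem b e = (0, rem) := by
  cases fuel with
  | zero => rfl
  | succ n =>
    have hS : rem.filter (fun s => s.2 = e ∧ s.1 < b) = 0 :=
      Multiset.filter_eq_nil.mpr fun s hs hp => h s hs hp.1
    simp [chainAux, hS]

lemma chainAux_cons_of_lt {fuel : ℕ} {rem : Multiset (ℤ × ℤ)} {b c e : ℤ} (hc : c < b)
    (hrem : ∀ s ∈ rem, s.2 = e → b ≤ s.1) :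
    chainAux (fuel + 1) ((c, e) ::ₘ rem) b e =
      ((chainAux fuel rem c (e - 1)).1 + 1, truncate (c, e) + (chainAux fuel rem c (e - 1)).2) := by
  have hS : ((c, e) ::ₘ rem).filter (fun s => s.2 = e ∧ s.1 < b) = {(c, e)} := by
    rw [Multiset.filter_cons_of_pos _ ⟨rfl, hc⟩,
      Multiset.filter_eq_nil.mpr fun s hs hp => absurd (hrem s hs hp.1) (not_le.mpr hp.2)]
    rfl
  have hb : msMaxD (Multiset.map Prod.fst {(c, e)}) = c :=
    msMaxD_eq_of_mem (by simp) (by simp)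
  simp only [chainAux, hS, hb, Multiset.singleton_ne_zero, if_false, Multiset.erase_cons_head]

lemma chainAux_rectMulti_add {A B C : ℤ} (hAC : A - 1 ≤ C) (fuel : ℕ) {rest : Multiset (ℤ × ℤ)}
    (hrest : ∀ s ∈ rest, s.2 < B) :
    chainAux ((C - A + 1).toNat + fuel) (rectMulti A B C + rest) (C + 1) (B + (C - A)) =
      ((chainAux fuel rest A (B - 1)).1 + (C - A + 1).toNat,
        (rectMulti A B C).bind truncate + (chainAux fuel rest A (B - 1)).2) := by
  induction C, hAC using Int.leInduction with
  | base =>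
    simp only [rectMulti_eq_zero_of_lt (show A - 1 < A by omega),
      show (A - 1 - A + 1).toNat = 0 by omega, sub_add_cancel, show B + (A - 1 - A) = B - 1 by ring,
      zero_add, add_zero, Multiset.zero_bind]
  | succ C hAC ih =>
    have hnext : ∀ s ∈ rectMulti A B C + rest, s.2 = B + (C + 1 - A) → C + 1 + 1 ≤ s.1 := by
      intro s hs hse
      rcases Multiset.mem_add.mp hs with hs | hs
      · have := mem_rectMulti.mp hs
        omega
      · have := hrest s hs
        omega
    rw [rectMulti_eq_cons (by omega), add_sub_cancel_right, Multiset.cons_add,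
      show (C + 1 - A + 1).toNat + fuel = (C - A + 1).toNat + fuel + 1 by omega,
      chainAux_cons_of_lt (by omega) hnext,
      show B + (C + 1 - A) - 1 = B + (C - A) by ring, ih, Multiset.cons_bind]
    refine Prod.ext ?_ ?_
    · simp only
      omega
    · simp only [add_assoc]

lemma chainAux_rectMulti_fst {A B C b : ℤ} (hAC : A ≤ C) (hb : C < b) :
    (chainAux ((C - A + 1).toNat + 1) (rectMulti A B C) b (B + (C - A))).1 = (C - A + 1).toNat := by
  have hrect := chainAux_rectMulti_add (B := B) (show A - 1 ≤ C - 1 by omega) 1 (rest := 0)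
    (by simp)
  have hempty : chainAux 1 0 A (B - 1) = (0, 0) := chainAux_of_forall_ne (by simp)
  rw [sub_add_cancel, add_zero, show B + (C - 1 - A) = B + (C - A) - 1 by ring, hempty] at hrect
  have hlower : ∀ s ∈ rectMulti A B (C - 1), s.2 = B + (C - A) → b ≤ s.1 := by
    intro s hs hse
    have := mem_rectMulti.mp hs
    omega
  rw [rectMulti_eq_cons hAC, show (C - A + 1).toNat + 1 = (C - 1 - A + 1).toNat + 1 + 1 by omega,
    chainAux_cons_of_lt hb hlower, hrect]
  simp only
  omega

lemma mwaStep_cons_of_lt {c x : ℤ} {rest : Multiset (ℤ × ℤ)} (h : ∀ s ∈ rest, s.2 < x) :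
    mwaStep ((c, x) ::ₘ rest) =
      ((x - (chainAux (Multiset.card rest + 1) rest c (x - 1)).1, x),
        truncate (c, x) + (chainAux (Multiset.card rest + 1) rest c (x - 1)).2) := by
  have hx : msMaxD (((c, x) ::ₘ rest).map Prod.snd) = x := by
    refine msMaxD_eq_of_mem (by simp) ?_
    simp only [Multiset.map_cons, Multiset.mem_cons, Multiset.mem_map]
    rintro y (rfl | ⟨s, hs, rfl⟩)
    · exact le_rfl
    · exact (h s hs).le
  have hfilter : ((c, x) ::ₘ rest).filter (fun s => s.2 = x) = {(c, x)} := by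
    rw [Multiset.filter_cons_of_pos (p := fun s : ℤ × ℤ => s.2 = x) _ rfl,
      Multiset.filter_eq_nil.mpr fun s hs hp => (h s hs).ne hp]
    rfl
  have hc : msMaxD (Multiset.map Prod.fst {(c, x)}) = c :=
    msMaxD_eq_of_mem (by simp) (by simp)
  simp only [mwaStep, hx, hfilter, hc, Multiset.card_cons, Multiset.erase_cons_head]

lemma mwaStep_rectMulti_add {A B C : ℤ} {rest : Multiset (ℤ × ℤ)} (hAC : A ≤ C)
    (hrest : ∀ s ∈ rest, s.2 < B) :
    mwaStep (rectMulti A B C + rest) =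
      ((B - (chainAux (Multiset.card rest + 1) rest A (B - 1)).1, B + (C - A)),
        (rectMulti A B C).bind truncate +
          (chainAux (Multiset.card rest + 1) rest A (B - 1)).2) := by
  have hlt : ∀ s ∈ rectMulti A B (C - 1) + rest, s.2 < B + (C - A) := by
    intro s hs
    rcases Multiset.mem_add.mp hs with hs | hs
    · have := mem_rectMulti.mp hs
      omega
    · have := hrest s hs
      omega
  have hchain := chainAux_rectMulti_add (show A - 1 ≤ C - 1 by omega) (Multiset.card rest + 1) hrest
  rw [sub_add_cancel, show B + (C - 1 - A) = B + (C - A) - 1 by ring] at hchain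
  rw [rectMulti_eq_cons hAC, Multiset.cons_add, mwaStep_cons_of_lt hlt, Multiset.card_add,
    card_rectMulti, add_assoc, hchain, Multiset.cons_bind]
  refine Prod.ext (Prod.ext ?_ rfl) ?_
  · simp only
    push_cast
    omega
  · simp only [add_assoc]

lemma mwaAux_succ {a : Multiset (ℤ × ℤ)} (h : a ≠ 0) (n : ℕ) :
    mwaAux (n + 1) a = (mwaStep a).1 ::ₘ mwaAux n (mwaStep a).2 := by
  simp [mwaAux, h]

lemma exists_mem_mwaAux_of_separated {A1 B1 C1 D1 A2 C2 : ℤ} (hAC1 : A1 ≤ C1)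
    (hD1 : A1 + D1 = B1 + C1) (hAC2 : A2 ≤ C2) (hCA : C1 < A2) (hAD : A2 ≤ D1 + 1) {B2 : ℤ}
    (hDB : D1 < B2) {fuel : ℕ}
    (hfuel : (B2 - D1).toNat ≤ fuel) :
    ∃ s ∈ mwaAux fuel (rectMulti A2 B2 C2 + rectMulti A1 B1 C1),
      s.2 - s.1 + 1 = (C1 - A1 + 1) + (C2 - A2 + 1) := by
  have hne : ∀ B, rectMulti A2 B C2 + rectMulti A1 B1 C1 ≠ 0 := fun B => by
    simp [rectMulti_eq_cons hAC2]
  have hends : ∀ s ∈ rectMulti A1 B1 C1, s.2 ≤ D1 := fun s hs => by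
    have := mem_rectMulti.mp hs
    omega
  induction B2, (show D1 + 1 ≤ B2 by omega) using Int.leInduction generalizing fuel with
  | base =>
    obtain ⟨g, rfl⟩ : ∃ g, fuel = g + 1 := ⟨fuel - 1, by omega⟩
    have hchain := chainAux_rectMulti_fst (B := B1) hAC1 hCA
    rw [← card_rectMulti (B := B1), show B1 + (C1 - A1) = D1 + 1 - 1 by omega] at hchain
    rw [mwaAux_succ (hne _), mwaStep_rectMulti_add hAC2 fun s hs => by linarith [hends s hs],
      hchain]
    have hcard := card_rectMulti (A := A1) (B := B1) (C := C1)
    refine ⟨_, Multiset.mem_cons_self _ _, ?_⟩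
    simp only
    omega
  | succ B2 hB2 ih =>
    obtain ⟨g, rfl⟩ : ∃ g, fuel = g + 1 := ⟨fuel - 1, by omega⟩
    have hstop : chainAux (Multiset.card (rectMulti A1 B1 C1) + 1) (rectMulti A1 B1 C1) A2
        (B2 + 1 - 1) = (0, rectMulti A1 B1 C1) :=
      chainAux_of_forall_ne fun s hs => by linarith [hends s hs]
    rw [mwaAux_succ (hne _), mwaStep_rectMulti_add hAC2 fun s hs => by linarith [hends s hs],
      hstop, rectMulti_bind_truncate (by omega), add_sub_cancel_right]
    obtain ⟨s, hs, hlen⟩ := ih (by omega) (fuel := g) (by omega)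
    exact ⟨s, Multiset.mem_cons_of_mem hs, hlen⟩

theorem mwa_long_segment_of_separated_general
    (A1 B1 C1 D1 A2 B2 C2 D2 : ℤ)
    (h1 : SpehQuad A1 B1 C1 D1) (h2 : SpehQuad A2 B2 C2 D2)
    (hAD : A2 ≤ D1 + 1)
    (hCA : C1 < A2) (hDB : D1 < B2) :
    ∃ s ∈ MWA (rectMulti A1 B1 C1 + rectMulti A2 B2 C2),
      s.2 - s.1 + 1 = (C1 - A1 + 1) + (C2 - A2 + 1) := by
  obtain ⟨-, hAC2, -⟩ := h2
  rw [MWA, add_comm]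
  refine exists_mem_mwaAux_of_separated h1.2.1 h1.2.2 hAC2 hCA hAD hDB ?_
  have hsize : (B2 + 1 - A2).toNat ≤ msSize (rectMulti A2 B2 C2) := by
    rw [msSize_rectMulti]
    exact Nat.le_mul_of_pos_left _ (by omega)
  rw [msSize_add]
  omega

theorem mwa_long_segment_of_separated
    (A1 B1 C1 D1 A2 B2 C2 D2 : ℤ)
    (h1 : SpehQuad A1 B1 C1 D1) (h2 : SpehQuad A2 B2 C2 D2)
    (hA : A1 < A2) (hD : D1 < D2) (hAD : A2 ≤ D1 + 1)
    (hCA : C1 < A2) (hDB : D1 < B2) :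
    ∃ s ∈ MWA (rectMulti A1 B1 C1 + rectMulti A2 B2 C2),
      s.2 - s.1 + 1 = (C1 - A1 + 1) + (C2 - A2 + 1) :=
  mwa_long_segment_of_separated_general A1 B1 C1 D1 A2 B2 C2 D2 h1 h2 hAD hCA hDB
end

section
/- Let (A,B,C,D) be a Speh quadruple and let a = m(A,B,C,D) be the associated rectangular multisegment. If c is a multisegment with c < a in the linking order, then it is not the case that MWA(c) < MWA(a). -/
/-! The beginnings of the segments of `m(A,B,C,D)` lie in `[A, C]`, and linking keeps them
there: the union and the intersection of two segments begin where one of them does. On such a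
multisegment every step of the Mœglin–Waldspurger algorithm chains segments with strictly
decreasing beginnings in `[A, C]`, so every segment of `MWA c` has at most `C - A + 1` points.
On the other side `MWA m(A,B,C,D) = m(A,C,B,D)` consists of segments of exactly `C - A + 1`
points. Any `d < m(A,C,B,D)` contains the union of two linked segments of it, which is strictly
longer, and along the linking order each segment is covered by a segment of the smaller
multisegment; so `d` has a segment of more than `C - A + 1` points and cannot be `MWA c`. -/

open Multiset

lemma msMaxD_eq {m : Multiset ℤ} {v : ℤ} (hv : v ∈ m) (hub : ∀ w ∈ m, w ≤ v) :
    msMaxD m = v := by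
  have hne : m.toFinset.Nonempty := ⟨v, mem_toFinset.2 hv⟩
  have hmax : m.toFinset.max' hne = v :=
    le_antisymm (Finset.max'_le _ _ _ fun w hw => hub w (mem_toFinset.1 hw))
      (Finset.le_max' _ v (mem_toFinset.2 hv))
  rw [msMaxD, ← Finset.coe_max' hne, hmax]
  rfl

lemma chainAux_succ_of_isGreatest {n : ℕ} {rem : Multiset (ℤ × ℤ)} {b e : ℤ} {t : ℤ × ℤ}
    (ht : t ∈ rem) (hte : t.2 = e) (htb : t.1 < b)
    (hmax : ∀ s ∈ rem, s.2 = e → s.1 < b → s.1 ≤ t.1) :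
    chainAux (n + 1) rem b e =
      ((chainAux n (rem.erase t) t.1 (e - 1)).1 + 1,
        truncate t + (chainAux n (rem.erase t) t.1 (e - 1)).2) := by
  have hS : rem.filter (fun s => s.2 = e ∧ s.1 < b) ≠ 0 :=
    ne_of_mem_of_not_mem' (mem_filter.2 ⟨ht, hte, htb⟩) (notMem_zero t)
  have hb' : msMaxD ((rem.filter fun s => s.2 = e ∧ s.1 < b).map Prod.fst) = t.1 :=
    msMaxD_eq (mem_map_of_mem _ (mem_filter.2 ⟨ht, hte, htb⟩)) (by
      simp only [mem_map, mem_filter]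
      rintro _ ⟨s, ⟨hs, hse, hsb⟩, rfl⟩
      exact hmax s hs hse hsb)
  obtain ⟨tb, te⟩ := t
  subst hte
  simp only [chainAux, hS, if_false, hb']

lemma chainAux_succ_of_forall_le {n : ℕ} {rem : Multiset (ℤ × ℤ)} {b e : ℤ}
    (h : ∀ s ∈ rem, s.2 = e → b ≤ s.1) : chainAux (n + 1) rem b e = (0, rem) := by
  have hS : rem.filter (fun s => s.2 = e ∧ s.1 < b) = 0 :=
    filter_eq_nil.2 fun s hs ⟨hse, hsb⟩ => (h s hs hse).not_gt hsb
  simp only [chainAux, hS, if_true]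

lemma chainAux_succ_eq_zero_or (n : ℕ) (rem : Multiset (ℤ × ℤ)) (b e : ℤ) :
    chainAux (n + 1) rem b e = (0, rem) ∨ ∃ t ∈ rem, t.1 < b ∧
      chainAux (n + 1) rem b e =
        ((chainAux n (rem.erase t) t.1 (e - 1)).1 + 1,
          truncate t + (chainAux n (rem.erase t) t.1 (e - 1)).2) := by
  by_cases hS : rem.filter (fun s => s.2 = e ∧ s.1 < b) = 0
  · left
    exact chainAux_succ_of_forall_le fun s hs hse => not_lt.1 fun hsb =>
      (filter_eq_nil.1 hS) s hs ⟨hse, hsb⟩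
  · right
    obtain ⟨t, ht, hmax⟩ := exists_max_image Prod.fst hS
    obtain ⟨htr, hte, htb⟩ := mem_filter.1 ht
    exact ⟨t, htr, htb, chainAux_succ_of_isGreatest htr hte htb
      fun s hs hse hsb => hmax s (mem_filter.2 ⟨hs, hse, hsb⟩)⟩

lemma mwaStep_of_isGreatest {m : Multiset (ℤ × ℤ)} {t : ℤ × ℤ} (ht : t ∈ m)
    (hend : ∀ s ∈ m, s.2 ≤ t.2) (hbeg : ∀ s ∈ m, s.2 = t.2 → s.1 ≤ t.1) :
    mwaStep m =
      ((t.2 - (chainAux (card m) (m.erase t) t.1 (t.2 - 1)).1, t.2),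
        truncate t + (chainAux (card m) (m.erase t) t.1 (t.2 - 1)).2) := by
  have hx : msMaxD (m.map Prod.snd) = t.2 :=
    msMaxD_eq (mem_map_of_mem _ ht) (by
      simp only [mem_map]
      rintro _ ⟨s, hs, rfl⟩
      exact hend s hs)
  have hb : msMaxD ((m.filter fun s => s.2 = t.2).map Prod.fst) = t.1 :=
    msMaxD_eq (mem_map_of_mem _ (mem_filter.2 ⟨ht, rfl⟩)) (by
      simp only [mem_map, mem_filter]
      rintro _ ⟨s, ⟨hs, hse⟩, rfl⟩
      exact hbeg s hs hse)
  simp only [mwaStep, hx, hb]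

lemma exists_mwaStep_eq {m : Multiset (ℤ × ℤ)} (hm : m ≠ 0) : ∃ t ∈ m,
    mwaStep m =
      ((t.2 - (chainAux (card m) (m.erase t) t.1 (t.2 - 1)).1, t.2),
        truncate t + (chainAux (card m) (m.erase t) t.1 (t.2 - 1)).2) := by
  -- the first segment chosen is the lexicographic maximum of (end, beginning)
  obtain ⟨t, ht, hmax⟩ := exists_max_image (fun s : ℤ × ℤ => toLex (s.2, s.1)) hm
  refine ⟨t, ht, mwaStep_of_isGreatest ht (fun s hs => ?_) (fun s hs hse => ?_)⟩
  · rcases Prod.Lex.le_iff.1 (hmax s hs) with h | h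
    · exact h.le
    · exact h.1.le
  · rcases Prod.Lex.le_iff.1 (hmax s hs) with h | h
    · exact absurd hse h.ne
    · exact h.2

lemma mwaAux_zero_right (n : ℕ) : mwaAux n 0 = 0 := by
  cases n <;> simp [mwaAux]

lemma mwaAux_succ_of_ne_zero (n : ℕ) {m : Multiset (ℤ × ℤ)} (hm : m ≠ 0) :
    mwaAux (n + 1) m = (mwaStep m).1 ::ₘ mwaAux n (mwaStep m).2 :=
  if_neg hm

def BeginningsIn (lo hi : ℤ) (m : Multiset (ℤ × ℤ)) : Prop := ∀ s ∈ m, lo ≤ s.1 ∧ s.1 ≤ hi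

section BeginningsIn

variable {lo hi : ℤ} {m m' : Multiset (ℤ × ℤ)}

lemma BeginningsIn.mono (h : BeginningsIn lo hi m) (hle : m' ≤ m) : BeginningsIn lo hi m' :=
  fun s hs => h s (mem_of_le hle hs)

lemma BeginningsIn.add (h : BeginningsIn lo hi m) (h' : BeginningsIn lo hi m') :
    BeginningsIn lo hi (m + m') := by
  intro s hs
  rcases mem_add.1 hs with hs | hs
  exacts [h s hs, h' s hs]

lemma beginningsIn_truncate {s : ℤ × ℤ} (hs : lo ≤ s.1 ∧ s.1 ≤ hi) :
    BeginningsIn lo hi (truncate s) := by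
  intro u hu
  unfold truncate at hu
  split_ifs at hu
  · rw [mem_singleton.1 hu]; exact hs
  · exact absurd hu (notMem_zero u)

lemma BeginningsIn.chainAux_snd (h : BeginningsIn lo hi m) (n : ℕ) (b e : ℤ) :
    BeginningsIn lo hi (chainAux n m b e).2 := by
  induction n generalizing m b e with
  | zero => exact h
  | succ n ih =>
    rcases chainAux_succ_eq_zero_or n m b e with h0 | ⟨t, ht, -, heq⟩
    · rw [h0]; exact h
    · rw [heq]
      exact (beginningsIn_truncate (h t ht)).add (ih (h.mono (erase_le t m)) t.1 (e - 1))

lemma BeginningsIn.chainAux_fst_le (h : BeginningsIn lo hi m) (n : ℕ) {b : ℤ} (hb : lo ≤ b)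
    (e : ℤ) : ((chainAux n m b e).1 : ℤ) ≤ b - lo := by
  induction n generalizing m b e with
  | zero => simpa [chainAux] using hb
  | succ n ih =>
    rcases chainAux_succ_eq_zero_or n m b e with h0 | ⟨t, ht, htb, heq⟩
    · rw [h0]; simpa using hb
    · rw [heq]
      have := ih (h.mono (erase_le t m)) (h t ht).1 (e - 1)
      push_cast
      omega

lemma BeginningsIn.mwaStep_fst_sub_le (h : BeginningsIn lo hi m) (hm : m ≠ 0) :
    (mwaStep m).1.2 - (mwaStep m).1.1 ≤ hi - lo := by
  obtain ⟨t, ht, heq⟩ := exists_mwaStep_eq hm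
  have hchain := (h.mono (erase_le t m)).chainAux_fst_le (card m) (h t ht).1 (t.2 - 1)
  have hthi := (h t ht).2
  rw [heq]
  dsimp only
  omega

lemma BeginningsIn.mwaStep_snd (h : BeginningsIn lo hi m) (hm : m ≠ 0) :
    BeginningsIn lo hi (mwaStep m).2 := by
  obtain ⟨t, ht, heq⟩ := exists_mwaStep_eq hm
  rw [heq]
  exact (beginningsIn_truncate (h t ht)).add ((h.mono (erase_le t m)).chainAux_snd _ _ _)

lemma BeginningsIn.sub_le_of_mem_mwaAux (h : BeginningsIn lo hi m) (n : ℕ) {s : ℤ × ℤ}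
    (hs : s ∈ mwaAux n m) : s.2 - s.1 ≤ hi - lo := by
  induction n generalizing m with
  | zero => exact absurd hs (notMem_zero s)
  | succ n ih =>
    rcases eq_or_ne m 0 with rfl | hm
    · rw [mwaAux_zero_right] at hs
      exact absurd hs (notMem_zero s)
    · rcases mem_cons.1 (mwaAux_succ_of_ne_zero n hm ▸ hs) with rfl | hs
      exacts [h.mwaStep_fst_sub_le hm, ih (h.mwaStep_snd hm) hs]

lemma BeginningsIn.sub_le_of_mem_MWA (h : BeginningsIn lo hi m) {s : ℤ × ℤ} (hs : s ∈ MWA m) :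
    s.2 - s.1 ≤ hi - lo :=
  h.sub_le_of_mem_mwaAux _ hs

lemma Prec.beginningsIn {c b : Multiset (ℤ × ℤ)} (h : Prec c b) (hb : BeginningsIn lo hi b) :
    BeginningsIn lo hi c := by
  obtain ⟨s, t, rest, rfl, -, rfl⟩ := h
  have hs := hb s (mem_cons_self _ _)
  have ht := hb t (mem_cons_of_mem (mem_cons_self _ _))
  have hinter : BeginningsIn lo hi (segInterM s t) := by
    intro u hu
    unfold segInterM at hu
    split_ifs at hu
    · rw [mem_singleton.1 hu]; constructor <;> omega
    · exact absurd hu (notMem_zero u)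
  intro u hu
  rcases mem_cons.1 hu with rfl | hu
  · constructor <;> omega
  · exact (hinter.add (hb.mono ((le_cons_self _ _).trans (le_cons_self _ _)))) u hu

lemma MLt.beginningsIn {c b : Multiset (ℤ × ℤ)} (h : MLt c b) (hb : BeginningsIn lo hi b) :
    BeginningsIn lo hi c := by
  induction h with
  | single h => exact h.beginningsIn hb
  | tail _ h ih => exact ih (h.beginningsIn hb)

end BeginningsIn

lemma Linked.sub_lt {s t : ℤ × ℤ} (h : Linked s t) : s.2 - s.1 < max s.2 t.2 - min s.1 t.1 := by
  by_contra! hle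
  apply h.2.1
  refine Finset.union_eq_left.2 (fun x hx => ?_)
  simp only [segSet, Finset.mem_Icc] at hx ⊢
  omega

lemma Prec.exists_mem_cover {c b : Multiset (ℤ × ℤ)} (h : Prec c b) {u : ℤ × ℤ} (hu : u ∈ b) :
    ∃ v ∈ c, v.1 ≤ u.1 ∧ u.2 ≤ v.2 := by
  obtain ⟨s, t, rest, rfl, -, rfl⟩ := h
  rcases mem_cons.1 hu with rfl | hu
  · exact ⟨_, mem_cons_self _ _, min_le_left _ _, le_max_left _ _⟩
  rcases mem_cons.1 hu with rfl | hu
  · exact ⟨_, mem_cons_self _ _, min_le_right _ _, le_max_right _ _⟩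
  · exact ⟨u, mem_cons_of_mem (mem_add.2 (Or.inr hu)), le_rfl, le_rfl⟩

lemma MLt.exists_mem_cover {c b : Multiset (ℤ × ℤ)} (h : MLt c b) {u : ℤ × ℤ} (hu : u ∈ b) :
    ∃ v ∈ c, v.1 ≤ u.1 ∧ u.2 ≤ v.2 := by
  induction h generalizing u with
  | single h => exact h.exists_mem_cover hu
  | tail _ h ih =>
    obtain ⟨w, hw, hw₁, hw₂⟩ := h.exists_mem_cover hu
    obtain ⟨v, hv, hv₁, hv₂⟩ := ih hw
    exact ⟨v, hv, hv₁.trans hw₁, hw₂.trans hv₂⟩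

lemma Prec.exists_lt_sub {k : ℤ} {c b : Multiset (ℤ × ℤ)} (h : Prec c b)
    (hb : ∀ s ∈ b, k ≤ s.2 - s.1) : ∃ s ∈ c, k < s.2 - s.1 := by
  obtain ⟨s, t, rest, rfl, hst, rfl⟩ := h
  exact ⟨_, mem_cons_self _ _, (hb s (mem_cons_self _ _)).trans_lt hst.sub_lt⟩

lemma MLt.exists_lt_sub {k : ℤ} {c b : Multiset (ℤ × ℤ)} (h : MLt c b)
    (hb : ∀ s ∈ b, k ≤ s.2 - s.1) : ∃ s ∈ c, k < s.2 - s.1 := by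
  cases h with
  | single h => exact h.exists_lt_sub hb
  | tail hcd h =>
    obtain ⟨u, hu, hku⟩ := h.exists_lt_sub hb
    obtain ⟨v, hv, hv₁, hv₂⟩ := MLt.exists_mem_cover hcd hu
    exact ⟨v, hv, by omega⟩

def rectMultiN (A B : ℤ) (p : ℕ) : Multiset (ℤ × ℤ) :=
  (range p).map fun j : ℕ => (A + j, B + j)

lemma rectMulti_eq_rectMultiN (A B C : ℤ) :
    rectMulti A B C = rectMultiN A B (C - A + 1).toNat := by
  ext s; simp [rectMulti, rectMultiN]

lemma rectMultiN_succ (A B : ℤ) (p : ℕ) :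
    rectMultiN A B (p + 1) = (A + p, B + p) ::ₘ rectMultiN A B p := by
  rw [rectMultiN, range_succ, map_cons]; rfl

lemma rectMultiN_succ_ne_zero (A B : ℤ) (p : ℕ) : rectMultiN A B (p + 1) ≠ 0 := by
  simp [rectMultiN]

lemma card_rectMultiN (A B : ℤ) (p : ℕ) : card (rectMultiN A B p) = p := by
  simp [rectMultiN]

lemma mem_rectMultiN {A B : ℤ} {p : ℕ} {s : ℤ × ℤ} :
    s ∈ rectMultiN A B p ↔ ∃ j : ℕ, j < p ∧ s = (A + j, B + j) := by
  simp [rectMultiN, eq_comm]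

lemma top_mem_rectMultiN (A B : ℤ) (p : ℕ) : (A + p, B + p) ∈ rectMultiN A B (p + 1) := by
  rw [rectMultiN_succ]; exact mem_cons_self _ _

lemma truncate_add_rectMultiN (A B : ℤ) (p : ℕ) :
    truncate (A + p, B + p) + (if A < B then rectMultiN A (B - 1) p else 0) =
      if A < B then rectMultiN A (B - 1) (p + 1) else 0 := by
  unfold truncate
  split_ifs
  · rw [rectMultiN_succ, singleton_add]; congr 2; ring
  · omega
  · omega
  · rfl

lemma chainAux_rectMultiN (A B : ℤ) {p n : ℕ} (hp : p ≤ n) :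
    chainAux n (rectMultiN A B p) (A + p) (B + p - 1) =
      (p, if A < B then rectMultiN A (B - 1) p else 0) := by
  induction p generalizing n with
  | zero => cases n <;> simp [chainAux, rectMultiN]
  | succ p ih =>
    obtain ⟨n, rfl⟩ : ∃ n', n = n' + 1 := ⟨n - 1, by omega⟩
    rw [chainAux_succ_of_isGreatest (top_mem_rectMultiN A B p) (by push_cast; ring)
      (by push_cast; omega) fun s hs _ _ => ?_]
    · rw [rectMultiN_succ, erase_cons_head,
        show B + ((p + 1 : ℕ) : ℤ) - 1 - 1 = B + p - 1 by push_cast; ring,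
        ih (by omega), truncate_add_rectMultiN]
    · obtain ⟨j, hj, rfl⟩ := mem_rectMultiN.1 hs
      dsimp only
      omega

lemma mwaStep_rectMultiN (A B : ℤ) (p : ℕ) :
    mwaStep (rectMultiN A B (p + 1)) =
      ((B, B + p), if A < B then rectMultiN A (B - 1) (p + 1) else 0) := by
  have hbound : ∀ s ∈ rectMultiN A B (p + 1), s.1 ≤ A + p ∧ s.2 ≤ B + p := by
    intro s hs
    obtain ⟨j, hj, rfl⟩ := mem_rectMultiN.1 hs
    dsimp only
    omega
  rw [mwaStep_of_isGreatest (top_mem_rectMultiN A B p) (fun s hs => (hbound s hs).2)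
    (fun s hs _ => (hbound s hs).1)]
  dsimp only
  rw [rectMultiN_succ, erase_cons_head, card_cons, card_rectMultiN,
    chainAux_rectMultiN A B (by omega), truncate_add_rectMultiN]
  congr 2
  ring

lemma mwaAux_rectMultiN {A B : ℤ} (hAB : A ≤ B) (p : ℕ) {n : ℕ} (hn : (B - A).toNat < n) :
    mwaAux n (rectMultiN A B (p + 1)) = rectMultiN A (A + p) (B - A + 1).toNat := by
  induction B, hAB using Int.leInduction generalizing n with
  | base =>
    obtain ⟨n, rfl⟩ : ∃ n', n = n' + 1 := ⟨n - 1, by omega⟩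
    rw [mwaAux_succ_of_ne_zero n (rectMultiN_succ_ne_zero A A p), mwaStep_rectMultiN,
      if_neg (lt_irrefl A), mwaAux_zero_right, show (A - A + 1).toNat = 0 + 1 by omega,
      rectMultiN_succ]
    simp [rectMultiN]
  | succ B hAB ih =>
    obtain ⟨n, rfl⟩ : ∃ n', n = n' + 1 := ⟨n - 1, by omega⟩
    rw [mwaAux_succ_of_ne_zero n (rectMultiN_succ_ne_zero A (B + 1) p), mwaStep_rectMultiN,
      if_pos (by omega), add_sub_cancel_right, ih (by omega),
      show (B + 1 - A + 1).toNat = (B - A + 1).toNat + 1 by omega, rectMultiN_succ A (A + p)]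
    congr 1
    exact Prod.ext (by dsimp only; omega) (by dsimp only; omega)

lemma lt_msSize_rectMulti {A B C : ℤ} (hAB : A ≤ B) (hAC : A ≤ C) :
    (B - A).toNat < msSize (rectMulti A B C) := by
  have hmem : (A, B) ∈ rectMulti A B C := by
    rw [rectMulti_eq_rectMultiN, mem_rectMultiN]
    exact ⟨0, by omega, by simp⟩
  calc (B - A).toNat < (B + 1 - A).toNat := by omega
    _ ≤ msSize (rectMulti A B C) :=
      le_sum_of_mem (mem_map_of_mem (fun s : ℤ × ℤ => (s.2 + 1 - s.1).toNat) hmem)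

theorem MWA_rectMulti {A B C : ℤ} (hAB : A ≤ B) (hAC : A ≤ C) :
    MWA (rectMulti A B C) = rectMulti A C B := by
  have hfuel := lt_msSize_rectMulti hAB hAC
  rw [MWA, rectMulti_eq_rectMultiN A B C, show (C - A + 1).toNat = (C - A).toNat + 1 by omega]
    at *
  rw [mwaAux_rectMultiN hAB _ hfuel, rectMulti_eq_rectMultiN,
    show A + ((C - A).toNat : ℤ) = C by omega]

lemma beginningsIn_rectMulti (A B C : ℤ) : BeginningsIn A C (rectMulti A B C) := by
  intro s hs
  obtain ⟨j, hj, rfl⟩ := mem_rectMultiN.1 (rectMulti_eq_rectMultiN A B C ▸ hs)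
  dsimp only
  omega

lemma sub_eq_of_mem_rectMulti {A B C : ℤ} {s : ℤ × ℤ} (hs : s ∈ rectMulti A B C) :
    s.2 - s.1 = B - A := by
  obtain ⟨j, -, rfl⟩ := mem_rectMultiN.1 (rectMulti_eq_rectMultiN A B C ▸ hs)
  dsimp only
  ring

theorem mwa_not_lt_of_lt_rectangular
    (A B C D : ℤ) (h : SpehQuad A B C D)
    (c : Multiset (ℤ × ℤ)) (hc : MLt c (rectMulti A B C)) :
    ¬ MLt (MWA c) (MWA (rectMulti A B C)) := by
  obtain ⟨hAB, hAC, -⟩ := h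
  rw [MWA_rectMulti hAB hAC]
  intro hlt
  obtain ⟨s, hs, hlong⟩ := hlt.exists_lt_sub fun s hs => (sub_eq_of_mem_rectMulti hs).ge
  have hshort := (hc.beginningsIn (beginningsIn_rectMulti A B C)).sub_le_of_mem_MWA hs
  omega
end
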